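/- arXiv:2204.01434 — 7 statements merged into one kernel-verified Lean document; each statement's English description precedes it below -/
import Mathlib

section
/- For any relation A on the real Hilbert space H = L²([0,∞); ℝ), the nonzero part of the Scaled Relative Graph of the relational inverse A⁻¹ is the image of the nonzero part of the Scaled Relative Graph of A under complex inversion: {z ∈ SRG(A⁻¹) : z ≠ 0} = {z⁻¹ : z ∈ SRG(A), z ≠ 0}. -/
/-! Swapping the roles of `u₁ - u₂` and `y₁ - y₂` keeps the angle between them and inverts the
ratio of their norms, so a witness pair for `z ∈ SRG A` is a witness pair for `z⁻¹ ∈ SRG A⁻¹`;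
since `relInv` is an involution, this gives both inclusions. -/

open MeasureTheory RealInnerProductSpace

noncomputable section

/-- The real Hilbert space `H = L²([0,∞); ℝ)`. -/
abbrev H : Type := Lp ℝ 2 (volume.restrict (Set.Ici (0:ℝ)))

/-- The Scaled Relative Graph of a relation `A ⊆ H × H`. -/
def SRG (A : Set (H × H)) : Set ℂ :=
  {z | ∃ u₁ u₂ y₁ y₂ : H, u₁ ≠ u₂ ∧ (u₁, y₁) ∈ A ∧ (u₂, y₂) ∈ A ∧
      ‖z‖ * ‖u₁ - u₂‖ = ‖y₁ - y₂‖ ∧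
      z.re * ‖u₁ - u₂‖ ^ 2 = ⟪u₁ - u₂, y₁ - y₂⟫}

/-- The relational inverse `A⁻¹ = {(y, u) : (u, y) ∈ A}`. -/
def relInv (A : Set (H × H)) : Set (H × H) := {p | (p.2, p.1) ∈ A}

section NormedAddCommGroup

variable {E : Type*} [NormedAddCommGroup E] {z : ℂ} {u y : E}

lemma norm_inv_mul_norm_eq_of_norm_mul_norm_eq (hz : z ≠ 0) (h : ‖z‖ * ‖u‖ = ‖y‖) :
    ‖z⁻¹‖ * ‖y‖ = ‖u‖ := by
  rw [norm_inv, ← h, inv_mul_cancel_left₀ (norm_ne_zero_iff.mpr hz)]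

lemma inv_re_mul_norm_sq_eq_inner [InnerProductSpace ℝ E] (hz : z ≠ 0) (hnorm : ‖z‖ * ‖u‖ = ‖y‖)
    (hre : z.re * ‖u‖ ^ 2 = ⟪u, y⟫) : z⁻¹.re * ‖y‖ ^ 2 = ⟪y, u⟫ := by
  have hz' : ‖z‖ ≠ 0 := norm_ne_zero_iff.mpr hz
  rw [real_inner_comm, ← hre, ← hnorm, Complex.inv_re, Complex.normSq_eq_norm_sq]
  field_simp

end NormedAddCommGroup

lemma relInv_relInv (A : Set (H × H)) : relInv (relInv A) = A := rfl

lemma inv_mem_SRG_relInv {A : Set (H × H)} {z : ℂ} (hz : z ∈ SRG A) (hz0 : z ≠ 0) :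
    z⁻¹ ∈ SRG (relInv A) := by
  obtain ⟨u₁, u₂, y₁, y₂, hne, h₁, h₂, hnorm, hre⟩ := hz
  have hy : y₁ ≠ y₂ := by
    rw [← sub_ne_zero, ← norm_ne_zero_iff, ← hnorm]
    exact mul_ne_zero (norm_ne_zero_iff.mpr hz0) (norm_ne_zero_iff.mpr (sub_ne_zero.mpr hne))
  exact ⟨y₁, y₂, u₁, u₂, hy, h₁, h₂, norm_inv_mul_norm_eq_of_norm_mul_norm_eq hz0 hnorm,
    inv_re_mul_norm_sq_eq_inner hz0 hnorm hre⟩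

theorem srg_inv (A : Set (H × H)) :
    {z ∈ SRG (relInv A) | z ≠ 0} = {w : ℂ | ∃ z ∈ SRG A, z ≠ 0 ∧ w = z⁻¹} := by
  ext w
  constructor
  · rintro ⟨hw, hw0⟩
    refine ⟨w⁻¹, ?_, inv_ne_zero hw0, (inv_inv w).symm⟩
    simpa only [relInv_relInv] using inv_mem_SRG_relInv hw hw0
  · rintro ⟨z, hz, hz0, rfl⟩
    exact ⟨inv_mem_SRG_relInv hz hz0, inv_ne_zero hz0⟩
end
end

section
/- Let A and B be relations on the real Hilbert space H = L²([0,∞); ℝ), and let S ⊆ ℂ be a set satisfying the chord property with SRG(B) ⊆ S. Then SRG(A + B) ⊆ SRG(A) + S, where the right-hand side is the Minkowski sum {a + s : a ∈ SRG(A), s ∈ S}. -/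
open MeasureTheory RealInnerProductSpace Pointwise

noncomputable section

/-- The sum of two relations: `A + B = {(x, y + z) : (x, y) ∈ A, (x, z) ∈ B}`. -/
def relAdd (A B : Set (H × H)) : Set (H × H) :=
  {p | ∃ y z : H, (p.1, y) ∈ A ∧ (p.1, z) ∈ B ∧ p.2 = y + z}

/-- A set `G ⊆ ℂ` satisfies the chord property if `z ∈ G` implies that the
segment `[z, conj z]` is contained in `G`. -/
def ChordProperty (G : Set ℂ) : Prop :=
  ∀ z ∈ G, ∀ α : ℝ, α ∈ Set.Icc (0:ℝ) 1 →
    (α : ℂ) * z + ((1 : ℂ) - (α : ℂ)) * (starRingEnd ℂ z) ∈ G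

/-!
Write `u = u₁ - u₂` and split the output differences of `A` and `B` into components along `u`
and orthogonal to it: `y = a u + y⊥`, `v = b u + v⊥`. A point `z` of `SRG (A + B)` coming from
these pairs has `Re z = a + b` and `|Im z| ‖u‖ = ‖y⊥ + v⊥‖`. With `p = ‖y⊥‖ / ‖u‖` and
`q = ‖v⊥‖ / ‖u‖`, the triangle inequality gives `||Im z| - p| ≤ q`. Hence `z = (a ± i p) + s`
where `a ± i p ∈ SRG A` and `s = b + i t` with `|t| ≤ q`; since `b + i q ∈ SRG B ⊆ S`, the chord
property puts `s` in `S`.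
-/

section InnerProductSpace

variable {E : Type*} [NormedAddCommGroup E] [InnerProductSpace ℝ E]

theorem norm_mul_norm_eq_iff_abs_im_mul_norm_eq {z : ℂ} {u y : E}
    (hre : z.re * ‖u‖ ^ 2 = ⟪u, y⟫) :
    ‖z‖ * ‖u‖ = ‖y‖ ↔ |z.im| * ‖u‖ = ‖y - z.re • u‖ := by
  have horth : ‖y - z.re • u‖ ^ 2 = ‖y‖ ^ 2 - z.re ^ 2 * ‖u‖ ^ 2 := by
    rw [norm_sub_sq_real, real_inner_smul_right, real_inner_comm, ← hre, norm_smul,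
      Real.norm_eq_abs, mul_pow, sq_abs]
    ring
  have hz : ‖z‖ ^ 2 = z.re ^ 2 + z.im ^ 2 := by
    rw [Complex.sq_norm, Complex.normSq_apply]; ring
  rw [← sq_eq_sq₀ (by positivity) (norm_nonneg _), ← sq_eq_sq₀ (by positivity) (norm_nonneg _),
    mul_pow, mul_pow, sq_abs, horth, hz]
  constructor <;> intro h <;> linarith

/-- `srgRe u y ± i srgIm u y` are the points of the scaled relative graph contributed by an input
difference `u` and the output difference `y`. -/
def srgRe (u y : E) : ℝ := ⟪u, y⟫ / ‖u‖ ^ 2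

def srgIm (u y : E) : ℝ := ‖y - srgRe u y • u‖ / ‖u‖

theorem srgRe_add (u y v : E) : srgRe u (y + v) = srgRe u y + srgRe u v := by
  rw [srgRe, srgRe, srgRe, inner_add_right, add_div]

theorem srgIm_nonneg (u y : E) : 0 ≤ srgIm u y := by
  unfold srgIm; positivity

theorem norm_mul_norm_eq_and_re_mul_eq_iff {z : ℂ} {u : E} (hu : u ≠ 0) (y : E) :
    (‖z‖ * ‖u‖ = ‖y‖ ∧ z.re * ‖u‖ ^ 2 = ⟪u, y⟫) ↔ z.re = srgRe u y ∧ |z.im| = srgIm u y := by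
  have hu' : ‖u‖ ≠ 0 := norm_ne_zero_iff.mpr hu
  have hre_iff : z.re * ‖u‖ ^ 2 = ⟪u, y⟫ ↔ z.re = srgRe u y :=
    (eq_div_iff (pow_ne_zero 2 hu')).symm
  rw [and_comm, ← hre_iff, and_congr_right_iff]
  intro hre
  rw [norm_mul_norm_eq_iff_abs_im_mul_norm_eq hre, hre_iff.mp hre, srgIm, eq_div_iff hu']

theorem abs_srgIm_add_sub_srgIm_le (u y v : E) :
    |srgIm u (y + v) - srgIm u y| ≤ srgIm u v := by
  have hsplit : y + v - srgRe u (y + v) • u = (y - srgRe u y • u) + (v - srgRe u v • u) := by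
    rw [srgRe_add, add_smul]; abel
  rcases eq_or_ne ‖u‖ 0 with hu | hu
  · simp [srgIm, hu]
  · rw [srgIm, srgIm, srgIm, hsplit, ← sub_div, abs_div, abs_norm]
    gcongr
    simpa using abs_norm_sub_norm_le (y - srgRe u y • u + (v - srgRe u v • u)) (y - srgRe u y • u)

end InnerProductSpace

theorem exists_abs_eq_and_abs_sub_le {x p q : ℝ} (hp : 0 ≤ p) (h : |(|x| - p)| ≤ q) :
    ∃ t, |t| = p ∧ |x - t| ≤ q := by
  rcases le_or_gt 0 x with hx | hx
  · exact ⟨p, abs_of_nonneg hp, by rwa [abs_of_nonneg hx] at h⟩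
  · refine ⟨-p, by rw [abs_neg, abs_of_nonneg hp], ?_⟩
    rw [abs_of_neg hx, ← abs_neg] at h
    convert h using 2; ring

theorem ChordProperty.mk_re_mem {S : Set ℂ} (hS : ChordProperty S) {z : ℂ} (hz : z ∈ S)
    {t : ℝ} (ht : |t| ≤ |z.im|) : (⟨z.re, t⟩ : ℂ) ∈ S := by
  obtain ⟨r, hr, rfl⟩ : ∃ r : ℝ, |r| ≤ 1 ∧ t = r * z.im := by
    rcases eq_or_ne z.im 0 with h0 | h0
    · rw [h0, abs_zero, abs_nonpos_iff] at ht
      exact ⟨0, by simp, by simp [ht]⟩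
    · refine ⟨t / z.im, ?_, (div_mul_cancel₀ _ h0).symm⟩
      rw [abs_div]; exact div_le_one_of_le₀ ht (abs_nonneg _)
  have hα : (r + 1) / 2 ∈ Set.Icc (0 : ℝ) 1 := by
    rw [abs_le] at hr; constructor <;> linarith
  convert hS z hz _ hα using 1
  apply Complex.ext <;> simp <;> ring

theorem mk_mem_SRG {A : Set (H × H)} {u₁ u₂ y₁ y₂ : H} (hne : u₁ ≠ u₂) (h₁ : (u₁, y₁) ∈ A)
    (h₂ : (u₂, y₂) ∈ A) {t : ℝ} (ht : |t| = srgIm (u₁ - u₂) (y₁ - y₂)) :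
    (⟨srgRe (u₁ - u₂) (y₁ - y₂), t⟩ : ℂ) ∈ SRG A :=
  ⟨u₁, u₂, y₁, y₂, hne, h₁, h₂,
    ((norm_mul_norm_eq_and_re_mul_eq_iff (sub_ne_zero.mpr hne) _).mpr ⟨rfl, ht⟩)⟩

theorem srg_add_subset (A B : Set (H × H)) (S : Set ℂ)
    (hS : ChordProperty S) (hBS : SRG B ⊆ S) :
    SRG (relAdd A B) ⊆ SRG A + S := by
  rintro z ⟨u₁, u₂, w₁, w₂, hne, ⟨y₁, v₁, hy₁, hv₁, hw₁⟩, ⟨y₂, v₂, hy₂, hv₂, hw₂⟩, hz⟩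
  simp only at hw₁ hw₂
  have hw : w₁ - w₂ = (y₁ - y₂) + (v₁ - v₂) := by rw [hw₁, hw₂]; abel
  rw [hw, norm_mul_norm_eq_and_re_mul_eq_iff (sub_ne_zero.mpr hne), srgRe_add] at hz
  obtain ⟨hz_re, hz_im⟩ := hz
  have hdev := abs_srgIm_add_sub_srgIm_le (u₁ - u₂) (y₁ - y₂) (v₁ - v₂)
  rw [← hz_im] at hdev
  obtain ⟨t, ht, hzt⟩ := exists_abs_eq_and_abs_sub_le (srgIm_nonneg _ _) hdev
  have hB := hBS (mk_mem_SRG hne hv₁ hv₂ (abs_of_nonneg (srgIm_nonneg _ _)))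
  have hs := hS.mk_re_mem hB (t := z.im - t) (by rwa [abs_of_nonneg (srgIm_nonneg _ _)])
  refine ⟨_, mk_mem_SRG hne hy₁ hy₂ ht, _, hs, ?_⟩
  apply Complex.ext <;> simp [hz_re]
end
end

section
/- Let A be a relation on the real Hilbert space H = L²([0,∞); ℝ) and let γ > 0. Then SRG(A) is contained in the closed disc {z ∈ ℂ : |z − γ/2| ≤ γ/2} if and only if γ⟪u₁−u₂, y₁−y₂⟫ ≥ ‖y₁−y₂‖² for all u₁, u₂ ∈ H with u₁ ≠ u₂ and all y₁ ∈ A(u₁), y₂ ∈ A(u₂). -/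
open MeasureTheory RealInnerProductSpace

noncomputable section

/-! Since `|z - γ/2|² = |z|² - γ Re z + (γ/2)²`, the disc is `{z | |z|² ≤ γ Re z}`. A point `z`
produced by increments `a = u₁ - u₂ ≠ 0`, `b = y₁ - y₂` has `|z| ‖a‖ = ‖b‖` and
`Re z ‖a‖² = ⟪a, b⟫`, so multiplying `|z|² ≤ γ Re z` by `‖a‖²` gives exactly `‖b‖² ≤ γ ⟪a, b⟫`.
Conversely every such pair does produce a point: by Cauchy–Schwarz `|⟪a, b⟫| / ‖a‖² ≤ ‖b‖ / ‖a‖`,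
so some `z` has that modulus and real part. -/

theorem Complex.norm_sub_ofReal_half_le_iff {γ : ℝ} (hγ : 0 ≤ γ) (z : ℂ) :
    ‖z - (γ / 2 : ℝ)‖ ≤ γ / 2 ↔ ‖z‖ ^ 2 ≤ γ * z.re := by
  rw [← sq_le_sq₀ (norm_nonneg _) (by positivity), Complex.sq_norm, Complex.sq_norm,
    Complex.normSq_apply, Complex.normSq_apply]
  simp only [Complex.sub_re, Complex.sub_im, Complex.ofReal_re, Complex.ofReal_im, sub_zero]
  constructor <;> intro h <;> nlinarith

theorem Complex.exists_norm_eq_re_eq {r x : ℝ} (h : |x| ≤ r) : ∃ z : ℂ, ‖z‖ = r ∧ z.re = x := by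
  have hr : 0 ≤ r := (abs_nonneg x).trans h
  have hx : 0 ≤ r ^ 2 - x ^ 2 := sub_nonneg.2 (sq_le_sq' (neg_le_of_abs_le h) (le_of_abs_le h))
  refine ⟨⟨x, √(r ^ 2 - x ^ 2)⟩, ?_, rfl⟩
  rw [Complex.norm_def, Complex.normSq_mk, Real.mul_self_sqrt hx, ← sq,
    add_sub_cancel, Real.sqrt_sq hr]

section InnerProductSpace

variable {E : Type*} [NormedAddCommGroup E] [InnerProductSpace ℝ E]

theorem exists_complex_norm_mul_eq_and_re_mul_eq {a : E} (ha : a ≠ 0) (b : E) :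
    ∃ z : ℂ, ‖z‖ * ‖a‖ = ‖b‖ ∧ z.re * ‖a‖ ^ 2 = ⟪a, b⟫ := by
  have hd : 0 < ‖a‖ := norm_pos_iff.2 ha
  have hcs : |⟪a, b⟫ / ‖a‖ ^ 2| ≤ ‖b‖ / ‖a‖ := by
    rw [abs_div, abs_of_nonneg (sq_nonneg ‖a‖), div_le_div_iff₀ (by positivity) hd]
    calc |⟪a, b⟫| * ‖a‖ ≤ ‖a‖ * ‖b‖ * ‖a‖ := by gcongr; exact abs_real_inner_le_norm a b
      _ = ‖b‖ * ‖a‖ ^ 2 := by ring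
  obtain ⟨z, hnorm, hre⟩ := Complex.exists_norm_eq_re_eq hcs
  exact ⟨z, by rw [hnorm]; field_simp, by rw [hre]; field_simp⟩

theorem norm_sq_le_mul_re_iff_of_secant {a b : E} (ha : a ≠ 0) {z : ℂ}
    (hnorm : ‖z‖ * ‖a‖ = ‖b‖) (hre : z.re * ‖a‖ ^ 2 = ⟪a, b⟫) (γ : ℝ) :
    ‖z‖ ^ 2 ≤ γ * z.re ↔ ‖b‖ ^ 2 ≤ γ * ⟪a, b⟫ := by
  have hd : 0 < ‖a‖ ^ 2 := by positivity [norm_pos_iff.2 ha]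
  rw [← hnorm, ← hre, ← mul_le_mul_iff_of_pos_right hd]
  ring_nf

end InnerProductSpace

theorem srg_subset_disc_iff_secantGain (A : Set (H × H)) (γ : ℝ) (hγ : 0 < γ) :
    SRG A ⊆ {z : ℂ | ‖z - (γ/2 : ℝ)‖ ≤ γ/2} ↔
      ∀ u₁ u₂ y₁ y₂ : H, u₁ ≠ u₂ → (u₁, y₁) ∈ A → (u₂, y₂) ∈ A →
        γ * ⟪u₁ - u₂, y₁ - y₂⟫ ≥ ‖y₁ - y₂‖ ^ 2 := by
  simp only [Set.subset_def, Set.mem_ofPred_eq, Complex.norm_sub_ofReal_half_le_iff hγ.le]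
  constructor
  · intro h u₁ u₂ y₁ y₂ hne h₁ h₂
    have hu : u₁ - u₂ ≠ 0 := sub_ne_zero.2 hne
    obtain ⟨z, hnorm, hre⟩ := exists_complex_norm_mul_eq_and_re_mul_eq hu (y₁ - y₂)
    exact (norm_sq_le_mul_re_iff_of_secant hu hnorm hre γ).1
      (h z ⟨u₁, u₂, y₁, y₂, hne, h₁, h₂, hnorm, hre⟩)
  · rintro h z ⟨u₁, u₂, y₁, y₂, hne, h₁, h₂, hnorm, hre⟩
    exact (norm_sq_le_mul_re_iff_of_secant (sub_ne_zero.2 hne) hnorm hre γ).2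
      (h u₁ u₂ y₁ y₂ hne h₁ h₂)
end
end

section
/- Let R₀, R₁, …, R_n and G₀, G₁, …, G_{n−1} be relations on the real Hilbert space H = L²([0,∞); ℝ). Define the nested circuit relations recursively by C_n := R_n and C_j := R_j + (G_j + (C_{j+1})⁻¹)⁻¹ for j = n−1, …, 0, and set C := C₀. If every G_j is input-strictly incrementally positive (i.e. μ_j-input strictly incrementally positive for some μ_j > 0) and every R_j is output-strictly incrementally positive (i.e. has incremental secant gain γ_j for some γ_j > 0), then C is output-strictly incrementally positive (has some finite incremental secant gain) and C⁻¹ is input-strictly incrementally positive (is μ-input strictly incrementally positive for some μ > 0). -/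
open MeasureTheory RealInnerProductSpace

noncomputable section

/-- `A` is `μ`-input strictly incrementally positive (`μ`-coercive). -/
def InputStrictlyPositive (A : Set (H × H)) (μ : ℝ) : Prop :=
  ∀ u₁ y₁ u₂ y₂ : H, (u₁, y₁) ∈ A → (u₂, y₂) ∈ A →
    ⟪u₁ - u₂, y₁ - y₂⟫ ≥ μ * ‖u₁ - u₂‖ ^ 2

/-- `A` has incremental secant gain `γ` (is `1/γ`-output strictly incrementally
positive, i.e. `(1/γ)`-cocoercive). -/
def HasSecantGain (A : Set (H × H)) (γ : ℝ) : Prop :=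
  ∀ u₁ y₁ u₂ y₂ : H, (u₁, y₁) ∈ A → (u₂, y₂) ∈ A →
    γ * ⟪u₁ - u₂, y₁ - y₂⟫ ≥ ‖y₁ - y₂‖ ^ 2

/-!
Inversion exchanges the two notions of strict positivity (a `μ`-coercive relation has a
`μ⁻¹`-secant-gain inverse and conversely), and a sum of relations keeps both (coercivity
moduli add, secant gains add). Hence, starting from `C n = R n`, each stage
`C j = R j + (G j + (C (j + 1))⁻¹)⁻¹` again has a finite secant gain, and so does `C 0`;
inverting once more makes `(C 0)⁻¹` coercive.
-/

lemma InputStrictlyPositive.hasSecantGain_relInv {A : Set (H × H)} {μ : ℝ} (hμ : 0 < μ)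
    (h : InputStrictlyPositive A μ) : HasSecantGain (relInv A) μ⁻¹ := by
  intro u₁ y₁ u₂ y₂ h₁ h₂
  have hA := h y₁ u₁ y₂ u₂ h₁ h₂
  rw [real_inner_comm] at hA
  exact (le_inv_mul_iff₀ hμ).2 hA

lemma HasSecantGain.inputStrictlyPositive_relInv {A : Set (H × H)} {γ : ℝ} (hγ : 0 < γ)
    (h : HasSecantGain A γ) : InputStrictlyPositive (relInv A) γ⁻¹ := by
  intro u₁ y₁ u₂ y₂ h₁ h₂
  have hA := h y₁ u₁ y₂ u₂ h₁ h₂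
  rw [real_inner_comm] at hA
  rw [ge_iff_le, inv_mul_le_iff₀ hγ]
  exact hA

lemma InputStrictlyPositive.relAdd {A B : Set (H × H)} {μ ν : ℝ}
    (hA : InputStrictlyPositive A μ) (hB : InputStrictlyPositive B ν) :
    InputStrictlyPositive (relAdd A B) (μ + ν) := by
  rintro u₁ w₁ u₂ w₂ ⟨y₁, z₁, hy₁, hz₁, rfl⟩ ⟨y₂, z₂, hy₂, hz₂, rfl⟩
  have hy := hA u₁ y₁ u₂ y₂ hy₁ hy₂
  have hz := hB u₁ z₁ u₂ z₂ hz₁ hz₂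
  rw [add_sub_add_comm, inner_add_right]
  linarith

lemma sq_add_le_mul_div_add_div {a b x y : ℝ} (ha : 0 < a) (hb : 0 < b) :
    (x + y) ^ 2 ≤ (a + b) * (x ^ 2 / a + y ^ 2 / b) := by
  rw [div_add_div _ _ ha.ne' hb.ne', mul_div_assoc', le_div_iff₀ (by positivity)]
  nlinarith [sq_nonneg (b * x - a * y)]

lemma HasSecantGain.relAdd {A B : Set (H × H)} {γ₁ γ₂ : ℝ} (hγ₁ : 0 < γ₁) (hγ₂ : 0 < γ₂)
    (hA : HasSecantGain A γ₁) (hB : HasSecantGain B γ₂) :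
    HasSecantGain (relAdd A B) (γ₁ + γ₂) := by
  rintro u₁ w₁ u₂ w₂ ⟨y₁, z₁, hy₁, hz₁, rfl⟩ ⟨y₂, z₂, hy₂, hz₂, rfl⟩
  have hy : ‖y₁ - y₂‖ ^ 2 / γ₁ ≤ ⟪u₁ - u₂, y₁ - y₂⟫ :=
    (div_le_iff₀' hγ₁).2 (hA u₁ y₁ u₂ y₂ hy₁ hy₂)
  have hz : ‖z₁ - z₂‖ ^ 2 / γ₂ ≤ ⟪u₁ - u₂, z₁ - z₂⟫ :=
    (div_le_iff₀' hγ₂).2 (hB u₁ z₁ u₂ z₂ hz₁ hz₂)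
  rw [add_sub_add_comm, inner_add_right]
  calc ‖(y₁ - y₂) + (z₁ - z₂)‖ ^ 2
      ≤ (‖y₁ - y₂‖ + ‖z₁ - z₂‖) ^ 2 := by gcongr; exact norm_add_le _ _
    _ ≤ (γ₁ + γ₂) * (‖y₁ - y₂‖ ^ 2 / γ₁ + ‖z₁ - z₂‖ ^ 2 / γ₂) :=
        sq_add_le_mul_div_add_div hγ₁ hγ₂
    _ ≤ (γ₁ + γ₂) * (⟪u₁ - u₂, y₁ - y₂⟫ + ⟪u₁ - u₂, z₁ - z₂⟫) := by gcongr

lemma exists_hasSecantGain_relAdd_relInv_relAdd_relInv {R G C : Set (H × H)}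
    (hR : ∃ γ > 0, HasSecantGain R γ) (hG : ∃ μ > 0, InputStrictlyPositive G μ)
    (hC : ∃ γ > 0, HasSecantGain C γ) :
    ∃ γ > 0, HasSecantGain (relAdd R (relInv (relAdd G (relInv C)))) γ := by
  obtain ⟨γR, hγR, hR⟩ := hR
  obtain ⟨μ, hμ, hG⟩ := hG
  obtain ⟨γ, hγ, hC⟩ := hC
  have hpos : 0 < μ + γ⁻¹ := by positivity
  have hinner := (hG.relAdd (hC.inputStrictlyPositive_relInv hγ)).hasSecantGain_relInv hpos
  exact ⟨_, by positivity, hR.relAdd hγR (inv_pos.2 hpos) hinner⟩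

theorem truncation_preserves_strict_positivity (n : ℕ)
    (R G C : ℕ → Set (H × H))
    (hG : ∀ j, j < n → ∃ μ > 0, InputStrictlyPositive (G j) μ)
    (hR : ∀ j, j ≤ n → ∃ γ > 0, HasSecantGain (R j) γ)
    (hCn : C n = R n)
    (hCj : ∀ j, j < n → C j = relAdd (R j) (relInv (relAdd (G j) (relInv (C (j + 1)))))) :
    (∃ γ > 0, HasSecantGain (C 0) γ) ∧
    (∃ μ > 0, InputStrictlyPositive (relInv (C 0)) μ) := by
  have hC : ∀ j ≤ n, ∃ γ > 0, HasSecantGain (C j) γ := by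
    intro j hj
    induction hj using Nat.decreasingInduction with
    | self => exact hCn ▸ hR n le_rfl
    | of_succ k hk ih =>
      rw [hCj k hk]
      exact exists_hasSecantGain_relAdd_relInv_relAdd_relInv (hR k hk.le) (hG k hk) ih
  obtain ⟨γ, hγ, hC₀⟩ := hC 0 n.zero_le
  exact ⟨⟨γ, hγ, hC₀⟩, ⟨γ⁻¹, inv_pos.2 hγ, hC₀.inputStrictlyPositive_relInv hγ⟩⟩
end
end

section
/- Let C and Ĉ be relations on the real Hilbert space H = L²([0,∞); ℝ), both with incremental secant gain μ > 0. Then for all u₁, u₂ ∈ H, y₁ ∈ C(u₁), y₂ ∈ C(u₂), ŷ₁ ∈ Ĉ(u₁), ŷ₂ ∈ Ĉ(u₂), the error increments satisfy ‖(y₁−ŷ₁) − (y₂−ŷ₂)‖ ≤ μ‖u₁−u₂‖; that is, the error relation C − Ĉ has incremental gain bound μ. -/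
open MeasureTheory RealInnerProductSpace

noncomputable section

/-- `‖a‖² ≤ γ⟪u, a⟫` says exactly that `a` lies in the closed ball of radius `(γ/2)‖u‖`
about `(γ/2) • u`. -/
theorem norm_sub_half_smul_le_of_norm_sq_le_inner {E : Type*} [NormedAddCommGroup E]
    [InnerProductSpace ℝ E] {γ : ℝ} (hγ : 0 ≤ γ) {u a : E} (h : ‖a‖ ^ 2 ≤ γ * ⟪u, a⟫) :
    ‖a - (γ / 2) • u‖ ≤ γ / 2 * ‖u‖ := by
  have hsq : ‖a - (γ / 2) • u‖ ^ 2 ≤ (γ / 2 * ‖u‖) ^ 2 := by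
    rw [norm_sub_sq_real, real_inner_smul_right, norm_smul, Real.norm_of_nonneg (by positivity),
      real_inner_comm]
    nlinarith
  exact (pow_le_pow_iff_left₀ (norm_nonneg _) (by positivity) two_ne_zero).mp hsq

theorem HasSecantGain.norm_sub_half_smul_le {C : Set (H × H)} {γ : ℝ} (hC : HasSecantGain C γ)
    (hγ : 0 ≤ γ) {u₁ u₂ y₁ y₂ : H} (h₁ : (u₁, y₁) ∈ C) (h₂ : (u₂, y₂) ∈ C) :
    ‖(y₁ - y₂) - (γ / 2) • (u₁ - u₂)‖ ≤ γ / 2 * ‖u₁ - u₂‖ :=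
  norm_sub_half_smul_le_of_norm_sq_le_inner hγ (hC u₁ y₁ u₂ y₂ h₁ h₂)

theorem error_relation_gain_bound (C Chat : Set (H × H)) (μ : ℝ) (hμ : 0 < μ)
    (hC : HasSecantGain C μ) (hChat : HasSecantGain Chat μ) :
    ∀ u₁ u₂ y₁ y₂ yh₁ yh₂ : H, (u₁, y₁) ∈ C → (u₂, y₂) ∈ C →
      (u₁, yh₁) ∈ Chat → (u₂, yh₂) ∈ Chat →
      ‖(y₁ - yh₁) - (y₂ - yh₂)‖ ≤ μ * ‖u₁ - u₂‖ := by
  intro u₁ u₂ y₁ y₂ yh₁ yh₂ h₁ h₂ hh₁ hh₂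
  set c : H := (μ / 2) • (u₁ - u₂)
  calc ‖(y₁ - yh₁) - (y₂ - yh₂)‖ = ‖((y₁ - y₂) - c) - ((yh₁ - yh₂) - c)‖ := by
        congr 1; abel
    _ ≤ ‖(y₁ - y₂) - c‖ + ‖(yh₁ - yh₂) - c‖ := norm_sub_le _ _
    _ ≤ μ / 2 * ‖u₁ - u₂‖ + μ / 2 * ‖u₁ - u₂‖ :=
        add_le_add (hC.norm_sub_half_smul_le hμ.le h₁ h₂)
          (hChat.norm_sub_half_smul_le hμ.le hh₁ hh₂)
    _ = μ * ‖u₁ - u₂‖ := by ring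
end
end

section
/- Let f : ℝ → ℝ satisfy f(0) = 0 and the incremental sector bound μ(a−b)² ≤ (a−b)(f(a)−f(b)) ≤ λ(a−b)² for all a, b ∈ ℝ, where 0 ≤ μ ≤ λ. Set c := (μ+λ)/2 and r := (λ−μ)/2. Then f is Lipschitz with constant λ, so composition with f defines a map F on the real Hilbert space H = L²([0,∞); ℝ) by F(u) := f ∘ u, and F satisfies ‖F(u₁) − F(u₂) − c(u₁−u₂)‖ ≤ r‖u₁−u₂‖ for all u₁, u₂ ∈ H; equivalently, the Scaled Relative Graph of F is contained in the closed disc of center c and radius r on the real axis. -/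
/-!
With `Δu = a - b`, `Δf = f a - f b`, `c = (μ + λ)/2` and `r = (λ - μ)/2`, the identity
`Δu² (r² Δu² - (Δf - c Δu)²) = (Δu Δf - μ Δu²)(λ Δu² - Δu Δf)` turns the sector bound into
the statement that `f - c • id` is `r`-Lipschitz, and composing with an `r`-Lipschitz map is
`r`-Lipschitz on `L²`. In a real inner product space the two equations defining `z ∈ SRG` give
`‖Δy - c Δu‖ = |z - c| ‖Δu‖`, so the `L²` bound puts `z` in the disc.
-/

open MeasureTheory RealInnerProductSpace

noncomputable section

theorem abs_sub_mul_sub_le_of_sector {f : ℝ → ℝ} {μ lam a b : ℝ}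
    (hlow : μ * (a - b) ^ 2 ≤ (a - b) * (f a - f b))
    (hup : (a - b) * (f a - f b) ≤ lam * (a - b) ^ 2) :
    |f a - f b - (μ + lam) / 2 * (a - b)| ≤ (lam - μ) / 2 * |a - b| := by
  rcases eq_or_ne a b with rfl | hab
  · simp
  have hd : 0 < (a - b) ^ 2 := by positivity [sub_ne_zero.2 hab]
  have hμlam : μ ≤ lam := le_of_mul_le_mul_right (hlow.trans hup) hd
  rw [← abs_of_nonneg (by linarith : 0 ≤ (lam - μ) / 2), ← abs_mul, ← sq_le_sq]
  refine le_of_mul_le_mul_left ?_ hd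
  linear_combination mul_nonneg (sub_nonneg.2 hlow) (sub_nonneg.2 hup)

theorem lipschitzWith_toNNReal_of_sector {f : ℝ → ℝ} {lam : ℝ}
    (hmono : ∀ a b, 0 ≤ (a - b) * (f a - f b))
    (hup : ∀ a b, (a - b) * (f a - f b) ≤ lam * (a - b) ^ 2) :
    LipschitzWith lam.toNNReal f := by
  refine LipschitzWith.of_dist_le_mul fun a b => ?_
  rw [Real.dist_eq, Real.dist_eq]
  rcases eq_or_ne a b with rfl | hab
  · simp
  have hd : 0 < |a - b| := abs_pos.2 (sub_ne_zero.2 hab)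
  have h : |f a - f b| * |a - b| ≤ lam * |a - b| * |a - b| := by
    rw [mul_comm, ← abs_mul, abs_of_nonneg (hmono a b), mul_assoc, ← sq, sq_abs]
    exact hup a b
  calc |f a - f b| ≤ lam * |a - b| := le_of_mul_le_mul_right h hd
    _ ≤ lam.toNNReal * |a - b| := mul_le_mul_of_nonneg_right (Real.le_coe_toNNReal lam) hd.le

theorem lipschitzWith_sub_mul_of_sector {f : ℝ → ℝ} {μ lam : ℝ}
    (hsec : ∀ a b : ℝ, μ * (a - b) ^ 2 ≤ (a - b) * (f a - f b) ∧
      (a - b) * (f a - f b) ≤ lam * (a - b) ^ 2) :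
    LipschitzWith ((lam - μ) / 2).toNNReal fun x => f x - (μ + lam) / 2 * x := by
  refine LipschitzWith.of_dist_le_mul fun a b => ?_
  rw [Real.dist_eq, Real.dist_eq]
  calc |f a - (μ + lam) / 2 * a - (f b - (μ + lam) / 2 * b)|
      = |f a - f b - (μ + lam) / 2 * (a - b)| := by ring_nf
    _ ≤ (lam - μ) / 2 * |a - b| := abs_sub_mul_sub_le_of_sector (hsec a b).1 (hsec a b).2
    _ ≤ ((lam - μ) / 2).toNNReal * |a - b| :=
      mul_le_mul_of_nonneg_right (Real.le_coe_toNNReal _) (abs_nonneg _)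

namespace LipschitzWith

variable {α : Type*} [MeasurableSpace α] {ν : Measure α} {p : ENNReal}
  {f : ℝ → ℝ} {K L : NNReal} {c : ℝ}

theorem compLp_sub_smul (hf : LipschitzWith K f) (hf0 : f 0 = 0)
    (hg : LipschitzWith L fun x => f x - c * x) (u : Lp ℝ p ν) :
    hf.compLp hf0 u - c • u = hg.compLp (by simp [hf0]) u := by
  apply Lp.ext
  filter_upwards [hf.coeFn_compLp hf0 u, hg.coeFn_compLp (by simp [hf0]) u,
    Lp.coeFn_sub (hf.compLp hf0 u) (c • u), Lp.coeFn_smul c u] with t hft hgt hsub hsmul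
  rw [hsub, Pi.sub_apply, hft, hsmul, hgt]
  rfl

theorem norm_compLp_sub_compLp_sub_smul_le (hf : LipschitzWith K f) (hf0 : f 0 = 0)
    (hg : LipschitzWith L fun x => f x - c * x) (u₁ u₂ : Lp ℝ p ν) :
    ‖hf.compLp hf0 u₁ - hf.compLp hf0 u₂ - c • (u₁ - u₂)‖ ≤ L * ‖u₁ - u₂‖ := by
  have hsplit : hf.compLp hf0 u₁ - hf.compLp hf0 u₂ - c • (u₁ - u₂) =
      (hf.compLp hf0 u₁ - c • u₁) - (hf.compLp hf0 u₂ - c • u₂) := by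
    rw [smul_sub]; abel
  rw [hsplit, hf.compLp_sub_smul hf0 hg, hf.compLp_sub_smul hf0 hg]
  exact hg.norm_compLp_sub_le _ u₁ u₂

end LipschitzWith

theorem norm_sub_ofReal_mul_norm_eq {E : Type*} [NormedAddCommGroup E] [InnerProductSpace ℝ E]
    {x y : E} {z : ℂ} (c : ℝ) (hnorm : ‖z‖ * ‖x‖ = ‖y‖) (hre : z.re * ‖x‖ ^ 2 = ⟪x, y⟫) :
    ‖z - c‖ * ‖x‖ = ‖y - c • x‖ := by
  rw [← sq_eq_sq₀ (by positivity) (norm_nonneg _), norm_sub_sq_real, real_inner_smul_right,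
    real_inner_comm, ← hre, ← hnorm, norm_smul, mul_pow, mul_pow, mul_pow, Complex.sq_norm,
    Complex.sq_norm, Complex.normSq_apply, Complex.normSq_apply, Real.norm_eq_abs, sq_abs]
  simp only [Complex.sub_re, Complex.sub_im, Complex.ofReal_re, Complex.ofReal_im]
  ring

theorem SRG_graph_subset_of_norm_sub_smul_le {F : H → H} {c r : ℝ}
    (hF : ∀ u₁ u₂, ‖F u₁ - F u₂ - c • (u₁ - u₂)‖ ≤ r * ‖u₁ - u₂‖) :
    SRG {p : H × H | p.2 = F p.1} ⊆ {z : ℂ | ‖z - c‖ ≤ r} := by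
  rintro z ⟨u₁, u₂, _, _, hne, (rfl : _ = F u₁), (rfl : _ = F u₂), hnorm, hre⟩
  have hpos : 0 < ‖u₁ - u₂‖ := norm_pos_iff.2 (sub_ne_zero.2 hne)
  refine le_of_mul_le_mul_right ?_ hpos
  rw [norm_sub_ofReal_mul_norm_eq c hnorm hre]
  exact hF u₁ u₂

theorem sector_bounded_nonlinearity (f : ℝ → ℝ) (μ lam : ℝ) (hμ : 0 ≤ μ) (hμlam : μ ≤ lam)
    (hf0 : f 0 = 0)
    (hsec : ∀ a b : ℝ, μ * (a - b) ^ 2 ≤ (a - b) * (f a - f b) ∧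
      (a - b) * (f a - f b) ≤ lam * (a - b) ^ 2) :
    ∃ hf : LipschitzWith lam.toNNReal f,
      (∀ u₁ u₂ : H,
        ‖hf.compLp hf0 u₁ - hf.compLp hf0 u₂ - ((μ + lam) / 2) • (u₁ - u₂)‖ ≤
          ((lam - μ) / 2) * ‖u₁ - u₂‖) ∧
      SRG {p : H × H | p.2 = hf.compLp hf0 p.1} ⊆
        {z : ℂ | ‖z - (((μ + lam) / 2 : ℝ) : ℂ)‖ ≤ (lam - μ) / 2} := by
  have hf := lipschitzWith_toNNReal_of_sector
    (fun a b => (mul_nonneg hμ (sq_nonneg _)).trans (hsec a b).1) fun a b => (hsec a b).2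
  have hbound : ∀ u₁ u₂ : H,
      ‖hf.compLp hf0 u₁ - hf.compLp hf0 u₂ - ((μ + lam) / 2) • (u₁ - u₂)‖ ≤
        ((lam - μ) / 2) * ‖u₁ - u₂‖ := fun u₁ u₂ => by
    simpa only [Real.coe_toNNReal _ (by linarith : 0 ≤ (lam - μ) / 2)] using
      hf.norm_compLp_sub_compLp_sub_smul_le hf0 (lipschitzWith_sub_mul_of_sector hsec) u₁ u₂
  exact ⟨hf, hbound, SRG_graph_subset_of_norm_sub_smul_le hbound⟩
end
end

section
/- Let A and B be relations on the real Hilbert space H = L²([0,∞); ℝ). Fix u₁ ≠ u₂ in H, y₁ ∈ A(u₁), y₂ ∈ A(u₂), w₁ ∈ B(u₁), w₂ ∈ B(u₂), and write Δu = u₁−u₂, Δy = y₁−y₂, Δw = w₁−w₂. Let z_A, z_B, z ∈ ℂ be any complex numbers with nonnegative imaginary part satisfying |z_A|‖Δu‖ = ‖Δy‖, (Re z_A)‖Δu‖² = ⟪Δu, Δy⟫, |z_B|‖Δu‖ = ‖Δw‖, (Re z_B)‖Δu‖² = ⟪Δu, Δw⟫, |z|‖Δu‖ = ‖Δy+Δw‖,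 and (Re z)‖Δu‖² = ⟪Δu, Δy+Δw⟫. Then z or its complex conjugate lies in the set {z_A, conj(z_A)} + [z_B, conj(z_B)], where [z₁, z₂] denotes the line segment {αz₁ + (1−α)z₂ : α ∈ [0,1]}. -/
/-!
Writing `P`, `Q` for the components of `Δy`, `Δw` orthogonal to `Δu`, the equations for `z_A` say
`Re z_A ‖Δu‖ = ⟪Δu, Δy⟫ / ‖Δu‖` and `Im z_A ‖Δu‖ = ‖P‖`, and likewise for `z_B` and `z`. Hence
`Re z = Re z_A + Re z_B`, while the triangle inequality `|‖P + Q‖ - ‖P‖| ≤ ‖Q‖` gives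
`|Im z - Im z_A| ≤ Im z_B`; so `z - z_A` lies on the vertical chord `[z_B, conj z_B]`.
-/

open MeasureTheory RealInnerProductSpace

noncomputable section

open Pointwise

/-- The line segment `[z₁, z₂] = {αz₁ + (1−α)z₂ : α ∈ [0,1]}` in `ℂ`. -/
def seg (z₁ z₂ : ℂ) : Set ℂ :=
  {w | ∃ α : ℝ, α ∈ Set.Icc (0:ℝ) 1 ∧ w = (α : ℂ) * z₁ + ((1 : ℂ) - (α : ℂ)) * z₂}

open ComplexConjugate

lemma Complex.im_mul_norm_eq_norm_sub_re_smul {E : Type*} [NormedAddCommGroup E]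
    [InnerProductSpace ℝ E] {u v : E} {w : ℂ} (him : 0 ≤ w.im)
    (hnorm : ‖w‖ * ‖u‖ = ‖v‖) (hinner : w.re * ‖u‖ ^ 2 = ⟪u, v⟫) :
    w.im * ‖u‖ = ‖v - w.re • u‖ := by
  have hsq : ‖v - w.re • u‖ ^ 2 = (w.im * ‖u‖) ^ 2 := by
    have hw : ‖w‖ ^ 2 = w.re ^ 2 + w.im ^ 2 := by
      rw [Complex.sq_norm, Complex.normSq_apply]; ring
    rw [norm_sub_sq_real, real_inner_smul_right, real_inner_comm, ← hinner, norm_smul,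
      Real.norm_eq_abs, mul_pow, sq_abs, ← hnorm, mul_pow, hw]
    ring
  exact (sq_eq_sq₀ (by positivity) (norm_nonneg _)).1 hsq.symm

lemma mem_seg_conj_of_abs_im_le {b w : ℂ} (hre : w.re = b.re) (him : |w.im| ≤ b.im) :
    w ∈ seg b (conj b) := by
  obtain ⟨him_lo, him_hi⟩ := abs_le.1 him
  set α : ℝ := (w.im + b.im) / (2 * b.im)
  -- for `b.im = 0` the junk value `α = 0` still works, because then `w = b = conj b`
  have hα : α * (2 * b.im) = w.im + b.im := div_mul_cancel_of_imp fun h => by linarith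
  refine ⟨α, ⟨div_nonneg (by linarith) (by linarith),
    div_le_one_of_le₀ (by linarith) (by linarith)⟩, ?_⟩
  apply Complex.ext <;>
    simp only [Complex.add_re, Complex.add_im, Complex.mul_re, Complex.mul_im, Complex.ofReal_re,
      Complex.ofReal_im, Complex.sub_re, Complex.sub_im, Complex.one_re, Complex.one_im,
      Complex.conj_re, Complex.conj_im]
  · linear_combination hre
  · linear_combination -hα

lemma mem_add_seg_conj_of_inner_add {E : Type*} [NormedAddCommGroup E]
    [InnerProductSpace ℝ E] {u v₁ v₂ : E} (hu : u ≠ 0) {a b z : ℂ}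
    (ha : 0 ≤ a.im) (hb : 0 ≤ b.im) (hz : 0 ≤ z.im)
    (ha₁ : ‖a‖ * ‖u‖ = ‖v₁‖) (ha₂ : a.re * ‖u‖ ^ 2 = ⟪u, v₁⟫)
    (hb₁ : ‖b‖ * ‖u‖ = ‖v₂‖) (hb₂ : b.re * ‖u‖ ^ 2 = ⟪u, v₂⟫)
    (hz₁ : ‖z‖ * ‖u‖ = ‖v₁ + v₂‖) (hz₂ : z.re * ‖u‖ ^ 2 = ⟪u, v₁ + v₂⟫) :
    z ∈ ({a, conj a} : Set ℂ) + seg b (conj b) := by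
  have hu_pos : 0 < ‖u‖ := norm_pos_iff.2 hu
  have hre : z.re = a.re + b.re := by
    refine mul_right_cancel₀ (pow_pos hu_pos 2).ne' ?_
    rw [hz₂, inner_add_right, ← ha₂, ← hb₂, add_mul]
  set P := v₁ - a.re • u
  set Q := v₂ - b.re • u
  have hP : a.im * ‖u‖ = ‖P‖ := Complex.im_mul_norm_eq_norm_sub_re_smul ha ha₁ ha₂
  have hQ : b.im * ‖u‖ = ‖Q‖ := Complex.im_mul_norm_eq_norm_sub_re_smul hb hb₁ hb₂
  have hPQ : z.im * ‖u‖ = ‖P + Q‖ := by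
    rw [Complex.im_mul_norm_eq_norm_sub_re_smul hz hz₁ hz₂, hre, add_smul, sub_add_sub_comm]
  have him : |(z - a).im| ≤ b.im := by
    refine le_of_mul_le_mul_right ?_ hu_pos
    calc |(z - a).im| * ‖u‖ = |‖P + Q‖ - ‖P‖| := by
          rw [← abs_of_pos hu_pos, ← abs_mul, Complex.sub_im, sub_mul, hPQ, hP]
      _ ≤ ‖P + Q - P‖ := abs_norm_sub_norm_le _ _
      _ = b.im * ‖u‖ := by rw [add_sub_cancel_left, hQ]
  have hmem := mem_seg_conj_of_abs_im_le (w := z - a) (by simp [hre]) him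
  simpa using Set.add_mem_add (Set.mem_insert a _) hmem

theorem pointwise_srg_sum_rule_general
    (u₁ u₂ y₁ y₂ w₁ w₂ : H) (hu : u₁ ≠ u₂)
    (zA zB z : ℂ) (hzA : 0 ≤ zA.im) (hzB : 0 ≤ zB.im) (hz : 0 ≤ z.im)
    (hzA1 : ‖zA‖ * ‖u₁ - u₂‖ = ‖y₁ - y₂‖)
    (hzA2 : zA.re * ‖u₁ - u₂‖ ^ 2 = ⟪u₁ - u₂, y₁ - y₂⟫)
    (hzB1 : ‖zB‖ * ‖u₁ - u₂‖ = ‖w₁ - w₂‖)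
    (hzB2 : zB.re * ‖u₁ - u₂‖ ^ 2 = ⟪u₁ - u₂, w₁ - w₂⟫)
    (hz1 : ‖z‖ * ‖u₁ - u₂‖ = ‖(y₁ - y₂) + (w₁ - w₂)‖)
    (hz2 : z.re * ‖u₁ - u₂‖ ^ 2 = ⟪u₁ - u₂, (y₁ - y₂) + (w₁ - w₂)⟫) :
    z ∈ ({zA, starRingEnd ℂ zA} : Set ℂ) + seg zB (starRingEnd ℂ zB) ∨
      starRingEnd ℂ z ∈ ({zA, starRingEnd ℂ zA} : Set ℂ) + seg zB (starRingEnd ℂ zB) :=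
  Or.inl <| mem_add_seg_conj_of_inner_add (sub_ne_zero.2 hu) hzA hzB hz
    hzA1 hzA2 hzB1 hzB2 hz1 hz2

theorem pointwise_srg_sum_rule (A B : Set (H × H))
    (u₁ u₂ y₁ y₂ w₁ w₂ : H) (hu : u₁ ≠ u₂)
    (hy₁ : (u₁, y₁) ∈ A) (hy₂ : (u₂, y₂) ∈ A)
    (hw₁ : (u₁, w₁) ∈ B) (hw₂ : (u₂, w₂) ∈ B)
    (zA zB z : ℂ) (hzA : 0 ≤ zA.im) (hzB : 0 ≤ zB.im) (hz : 0 ≤ z.im)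
    (hzA1 : ‖zA‖ * ‖u₁ - u₂‖ = ‖y₁ - y₂‖)
    (hzA2 : zA.re * ‖u₁ - u₂‖ ^ 2 = ⟪u₁ - u₂, y₁ - y₂⟫)
    (hzB1 : ‖zB‖ * ‖u₁ - u₂‖ = ‖w₁ - w₂‖)
    (hzB2 : zB.re * ‖u₁ - u₂‖ ^ 2 = ⟪u₁ - u₂, w₁ - w₂⟫)
    (hz1 : ‖z‖ * ‖u₁ - u₂‖ = ‖(y₁ - y₂) + (w₁ - w₂)‖)
    (hz2 : z.re * ‖u₁ - u₂‖ ^ 2 = ⟪u₁ - u₂, (y₁ - y₂) + (w₁ - w₂)⟫) :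
    z ∈ ({zA, starRingEnd ℂ zA} : Set ℂ) + seg zB (starRingEnd ℂ zB) ∨
      starRingEnd ℂ z ∈ ({zA, starRingEnd ℂ zA} : Set ℂ) + seg zB (starRingEnd ℂ zB) :=
  pointwise_srg_sum_rule_general u₁ u₂ y₁ y₂ w₁ w₂ hu zA zB z hzA hzB hz hzA1 hzA2 hzB1 hzB2 hz1 hz2
end
end
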